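/- For all integers d ≥ 3 and M ≥ 3, the average effective resistance of the d-dimensional toroidal grid satisfies R_ave(T_{M^d}) ≥ 1/(4d); that is, M^{-d} Σ_{k ∈ {0,...,M-1}^d, k ≠ 0} (2d - 2 Σ_{i=1}^d cos(2π k_i / M))^{-1} ≥ 1/(4d). -/

import Mathlib

open Real Finset

/-- Average effective resistance of the `d`-dimensional toroidal grid `T_{M^d}`
(spectral formula). -/
noncomputable def RaveTorus (d M : ℕ) : ℝ :=
  (1 / (M : ℝ) ^ d) *
    ∑ k ∈ (Fintype.piFinset fun _ : Fin d => Finset.range M).filter (· ≠ 0),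
      (2 * d - 2 * ∑ i, Real.cos (2 * π * k i / M))⁻¹

/-! Each nonzero mode `k` has eigenvalue `λ_k = 2 ∑ᵢ (1 - cos (2π kᵢ / M))` in `(0, 4d]`, so each
of the `M^d - 1` terms is at least `1/(4d)`. The first unit vector has `λ ≤ 4`, so its term is at
least `1/4 ≥ 2/(4d)`, which makes up for the missing zero mode. -/

lemma Real.cos_two_pi_mul_div_lt_one {k M : ℕ} (hk : 0 < k) (hkM : k < M) :
    cos (2 * π * k / M) < 1 := by
  have hM : (0 : ℝ) < M := by exact_mod_cast hk.trans hkM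
  have hpos : 0 < 2 * π * k / M := by positivity
  have hlt : 2 * π * k / M < 2 * π := by
    rw [div_lt_iff₀ hM]
    have : (k : ℝ) < M := by exact_mod_cast hkM
    nlinarith [pi_pos]
  refine (cos_le_one _).lt_of_ne fun h => ?_
  have := (cos_eq_one_iff_of_lt_of_lt (by linarith) hlt).1 h
  linarith

lemma Finset.add_one_mul_le_sum {α : Type*} {s : Finset α} {f : α → ℝ} {a : α} {c : ℝ}
    (ha : a ∈ s) (hf : ∀ x ∈ s, c ≤ f x) (hfa : 2 * c ≤ f a) :
    (#s + 1) * c ≤ ∑ x ∈ s, f x := by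
  classical
  have hrest := card_nsmul_le_sum (s.erase a) f c fun x hx => hf x (mem_of_mem_erase hx)
  have hcard : ((#(s.erase a) : ℕ) : ℝ) + 1 = #s := by
    exact_mod_cast card_erase_add_one ha
  rw [nsmul_eq_mul] at hrest
  rw [← add_sum_erase s f ha]
  linear_combination hfa + hrest - c * hcard

lemma card_piFinset_range_filter_ne_zero_add_one {d M : ℕ} (hM : 0 < M) :
    #((Fintype.piFinset fun _ : Fin d => range M).filter (· ≠ 0)) + 1 = M ^ d := by
  rw [filter_ne', card_erase_add_one (by simpa using fun _ => hM)]
  simp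

/-- The eigenvalue of the Laplacian of the torus `(ℤ/Mℤ)^d` at the character `k`. -/
noncomputable def torusEigenvalue (d M : ℕ) (k : Fin d → ℕ) : ℝ :=
  2 * d - 2 * ∑ i, cos (2 * π * k i / M)

namespace torusEigenvalue

variable {d M : ℕ} {k : Fin d → ℕ}

lemma eq_two_mul_sum (d M : ℕ) (k : Fin d → ℕ) :
    torusEigenvalue d M k = 2 * ∑ i, (1 - cos (2 * π * k i / M)) := by
  simp [torusEigenvalue, sum_sub_distrib, mul_sub]

lemma pos (hkM : ∀ i, k i < M) (hk : k ≠ 0) : 0 < torusEigenvalue d M k := by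
  obtain ⟨j, hj⟩ := Function.ne_iff.1 hk
  rw [eq_two_mul_sum]
  refine mul_pos two_pos (sum_pos' (fun i _ => sub_nonneg.2 (cos_le_one _)) ⟨j, mem_univ _, ?_⟩)
  exact sub_pos.2 (cos_two_pi_mul_div_lt_one (Nat.pos_of_ne_zero hj) (hkM j))

lemma le_four_mul (d M : ℕ) (k : Fin d → ℕ) : torusEigenvalue d M k ≤ 4 * d := by
  have : ∑ i, (1 - cos (2 * π * k i / M)) ≤ ∑ _i : Fin d, (2 : ℝ) :=
    sum_le_sum fun i _ => by linarith [neg_one_le_cos (2 * π * k i / M)]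
  rw [eq_two_mul_sum]
  simp only [sum_const, card_univ, Fintype.card_fin, nsmul_eq_mul] at this
  linarith

lemma single_le_four (M : ℕ) (j : Fin d) : torusEigenvalue d M (Pi.single j 1) ≤ 4 := by
  rw [eq_two_mul_sum, Fintype.sum_eq_single j fun i hi => by simp [hi]]
  simp only [Pi.single_eq_same, Nat.cast_one, mul_one]
  linarith [neg_one_le_cos (2 * π / M)]

lemma inv_four_mul_le_inv (hkM : ∀ i, k i < M) (hk : k ≠ 0) :
    (4 * d : ℝ)⁻¹ ≤ (torusEigenvalue d M k)⁻¹ :=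
  inv_anti₀ (pos hkM hk) (le_four_mul d M k)

lemma inv_four_le_inv_single (hM : 1 < M) (j : Fin d) :
    (4 : ℝ)⁻¹ ≤ (torusEigenvalue d M (Pi.single j 1))⁻¹ := by
  refine inv_anti₀ (pos (fun i => ?_) (by simp)) (single_le_four M j)
  rw [Pi.single_apply]
  split_ifs <;> omega

end torusEigenvalue

theorem torus_resistance_lower_bound (d M : ℕ) (hd : 3 ≤ d) (hM : 3 ≤ M) :
    1 / (4 * d) ≤ RaveTorus d M := by
  set s := (Fintype.piFinset fun _ : Fin d => range M).filter (· ≠ 0)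
  have hmem : ∀ k ∈ s, (∀ i, k i < M) ∧ k ≠ 0 := by simp [s]
  let j : Fin d := ⟨0, by omega⟩
  have hj : Pi.single j 1 ∈ s := by
    simp only [s, mem_filter, Fintype.mem_piFinset, mem_range, ne_eq, Pi.single_eq_zero_iff]
    exact ⟨fun i => by rw [Pi.single_apply]; split_ifs <;> omega, one_ne_zero⟩
  have hsingle : 2 * (4 * d : ℝ)⁻¹ ≤ (torusEigenvalue d M (Pi.single j 1))⁻¹ := by
    refine le_trans ?_ (torusEigenvalue.inv_four_le_inv_single (by omega) j)
    have hd2 : (2 : ℝ) ≤ d := by norm_cast; omega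
    rw [← div_eq_mul_inv, div_le_iff₀ (by positivity)]
    linarith
  have hsum := add_one_mul_le_sum hj
    (fun k hk => torusEigenvalue.inv_four_mul_le_inv (hmem k hk).1 (hmem k hk).2) hsingle
  rw [← Nat.cast_add_one, card_piFinset_range_filter_ne_zero_add_one (by omega)] at hsum
  have hMd : (0 : ℝ) < M ^ d := by positivity
  rw [RaveTorus, one_div, one_div, inv_mul_eq_div, le_div_iff₀ hMd, mul_comm]
  push_cast at hsum
  exact hsum
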